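/- arXiv:0805.2904 — 3 statements merged into one kernel-verified Lean document; each statement's English description precedes it below -/
import Mathlib

section
/- Fix integers l ≥ 1 and 0 ≤ j ≤ l, and set A(l,i,j) = ((−1)^{i−j}+1)/16 · (i−j) + ((−1)^{i−j+1}+1)/16 · (i + j − 2l − 1). Let G^j be a complex vector space of dimension 2l−2j+1 with basis f_j,…,f_{2l−j}, and set f_r = 0 for r outside {j,…,2l−j}. Define operators F^+ f_i = A(l,i+1,j) f_{i+1} and F^- f_i = f_{i−1}, and H := 2(F^+F^- + F^-F^+). Then H f_i = ((i − l)/2) f_i for all i with j ≤ i ≤ 2l−j. -/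
noncomputable section

/-- The structure constant `A(l,i,j) = ((−1)^{i−j}+1)/16·(i−j) +
((−1)^{i−j+1}+1)/16·(i+j−2l−1)`. -/
def A (l : ℕ) (i j : ℤ) : ℂ :=
  (((-1 : ℂ) ^ (i - j) + 1) / 16) * ((i : ℂ) - (j : ℂ)) +
    (((-1 : ℂ) ^ (i - j + 1) + 1) / 16) * ((i : ℂ) + (j : ℂ) - 2 * (l : ℂ) - 1)

/-- The basis vector `f_r` of `G^j`, with the convention `f_r = 0` for `r`
outside `{j,…,2l−j}`; modeled inside `ℤ →₀ ℂ`. -/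
def fv (l j : ℕ) (r : ℤ) : ℤ →₀ ℂ :=
  if (j : ℤ) ≤ r ∧ r ≤ 2 * l - j then Finsupp.single r 1 else 0

/-- The raising operator `σ_j(f^+) f_i = A(l,i+1,j) f_{i+1}`. -/
def sFp (l j : ℕ) : (ℤ →₀ ℂ) →ₗ[ℂ] (ℤ →₀ ℂ) :=
  Finsupp.lsum ℂ fun i => LinearMap.toSpanSingleton ℂ _ (A l (i + 1) j • fv l j (i + 1))

/-- The lowering operator `σ_j(f^-) f_i = f_{i−1}`. -/
def sFm (l j : ℕ) : (ℤ →₀ ℂ) →ₗ[ℂ] (ℤ →₀ ℂ) :=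
  Finsupp.lsum ℂ fun i => LinearMap.toSpanSingleton ℂ _ (fv l j (i - 1))

/-- `σ_j(h) = 2{σ_j(f^+), σ_j(f^-)}`. -/
def sH (l j : ℕ) : (ℤ →₀ ℂ) →ₗ[ℂ] (ℤ →₀ ℂ) :=
  (2 : ℂ) • (sFp l j ∘ₗ sFm l j + sFm l j ∘ₗ sFp l j)

/-- `σ_j(e^+) = 2{σ_j(f^+), σ_j(f^+)} = 4 σ_j(f^+)²`. -/
def sEp (l j : ℕ) : (ℤ →₀ ℂ) →ₗ[ℂ] (ℤ →₀ ℂ) := (4 : ℂ) • (sFp l j ∘ₗ sFp l j)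

/-- `σ_j(e^-) = −2{σ_j(f^-), σ_j(f^-)} = −4 σ_j(f^-)²`. -/
def sEm (l j : ℕ) : (ℤ →₀ ℂ) →ₗ[ℂ] (ℤ →₀ ℂ) := (-4 : ℂ) • (sFm l j ∘ₗ sFm l j)

/-- The module `G^j = ℂ^{2l−2j+1}`, spanned by the `f_i`, `j ≤ i ≤ 2l−j`. -/
def Gmod (l j : ℕ) : Submodule ℂ (ℤ →₀ ℂ) :=
  Submodule.span ℂ
    {x | ∃ i : ℤ, (j : ℤ) ≤ i ∧ i ≤ 2 * l - j ∧ x = Finsupp.single i 1}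

lemma fv_in (l j : ℕ) (r : ℤ) (h1 : (j : ℤ) ≤ r) (h2 : r ≤ 2 * l - j) :
    fv l j r = Finsupp.single r 1 := if_pos ⟨h1, h2⟩

lemma fv_out (l j : ℕ) (r : ℤ) (h : ¬((j : ℤ) ≤ r ∧ r ≤ 2 * l - j)) :
    fv l j r = 0 := if_neg h

lemma sFm_single (l j : ℕ) (k : ℤ) : sFm l j (Finsupp.single k 1) = fv l j (k - 1) := by
  rw [sFm, Finsupp.lsum_single, LinearMap.toSpanSingleton_apply, one_smul]

lemma sFp_single (l j : ℕ) (k : ℤ) :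
    sFp l j (Finsupp.single k 1) = A l (k + 1) j • fv l j (k + 1) := by
  rw [sFp, Finsupp.lsum_single, LinearMap.toSpanSingleton_apply, one_smul]

lemma A_left (l j : ℕ) : A l j j = 0 := by
  simp [A, sub_self]

lemma A_right (l j : ℕ) (hj : j ≤ l) : A l (2 * l - j + 1) j = 0 := by
  have he : (2 * (l : ℤ) - j + 1) - j = 2 * ((l : ℤ) - j) + 1 := by ring
  have ho : Odd ((2 * (l : ℤ) - j + 1) - j) := by rw [he]; exact odd_two_mul_add_one _
  have he2 : Even ((2 * (l : ℤ) - j + 1) - j + 1) := by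
    rcases ho with ⟨m, hm⟩; exact ⟨m + 1, by omega⟩
  rw [A, Odd.neg_one_zpow ho, Even.neg_one_zpow he2]
  push_cast
  ring

lemma A_sum (l j : ℕ) (i : ℤ) : A l i j + A l (i + 1) j = ((i : ℂ) - l) / 4 := by
  rcases Int.even_or_odd (i - j) with h | h
  · have h1 : ((-1 : ℂ)) ^ (i - j) = 1 := Even.neg_one_zpow h
    have h2 : ((-1 : ℂ)) ^ (i - j + 1) = -1 := Odd.neg_one_zpow (Even.add_one h)
    have h3 : ((-1 : ℂ)) ^ (i + 1 - j) = -1 := by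
      rw [show i + 1 - j = i - j + 1 by ring]; exact h2
    have h4 : ((-1 : ℂ)) ^ (i + 1 - j + 1) = 1 := by
      rw [show i + 1 - j + 1 = i - j + 2 by ring]
      exact Even.neg_one_zpow (by rcases h with ⟨m, hm⟩; exact ⟨m + 1, by omega⟩)
    rw [A, A, h1, h2, h3, h4]
    push_cast; ring
  · have h1 : ((-1 : ℂ)) ^ (i - j) = -1 := Odd.neg_one_zpow h
    have h2 : ((-1 : ℂ)) ^ (i - j + 1) = 1 := Even.neg_one_zpow (Odd.add_one h)
    have h3 : ((-1 : ℂ)) ^ (i + 1 - j) = 1 := by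
      rw [show i + 1 - j = i - j + 1 by ring]; exact h2
    have h4 : ((-1 : ℂ)) ^ (i + 1 - j + 1) = -1 := by
      rw [show i + 1 - j + 1 = i - j + 2 by ring]
      exact Odd.neg_one_zpow (by rcases h with ⟨m, hm⟩; exact ⟨m + 1, by omega⟩)
    rw [A, A, h1, h2, h3, h4]
    push_cast; ring


/-- on `G^j`, `H f_i = ((i − l)/2) f_i` for `j ≤ i ≤ 2l−j`. -/
theorem sH_eigenvalue (l j : ℕ) (hl : 1 ≤ l) (hj : j ≤ l)
    (i : ℤ) (h1 : (j : ℤ) ≤ i) (h2 : i ≤ 2 * l - j) :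
    sH l j (Finsupp.single i 1) = (((i : ℂ) - (l : ℂ)) / 2) • Finsupp.single i 1 := by
  have hfi : fv l j i = Finsupp.single i 1 := fv_in l j i h1 h2
  have key1 : sFp l j (fv l j (i - 1)) = A l i j • fv l j i := by
    by_cases hc : (j : ℤ) ≤ i - 1
    · rw [fv_in l j (i - 1) hc (by omega), sFp_single, sub_add_cancel]
    · have hij : i = j := by omega
      rw [fv_out l j (i - 1) (by omega), map_zero, hij, A_left, zero_smul]
  have key2 : sFm l j (A l (i + 1) j • fv l j (i + 1)) = A l (i + 1) j • fv l j i := by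
    rw [map_smul]
    by_cases hc : i + 1 ≤ 2 * (l : ℤ) - j
    · rw [fv_in l j (i + 1) (by omega) hc, sFm_single, add_sub_cancel_right]
    · have hi : i = 2 * (l : ℤ) - j := by omega
      have hA : A l (i + 1) j = 0 := by rw [hi]; exact A_right l j hj
      rw [hA, zero_smul, zero_smul]
  have : sH l j (Finsupp.single i 1)
      = (2 : ℂ) • ((A l i j + A l (i + 1) j) • fv l j i) := by
    rw [sH]
    simp only [LinearMap.smul_apply, LinearMap.add_apply, LinearMap.comp_apply]
    rw [sFm_single, sFp_single, key1, key2, add_smul]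
  rw [this, hfi, smul_smul, A_sum]
  congr 1
  ring
end
end

section
/- The representation σ_j of osp(1|2) on G^j is irreducible: the only subspaces of G^j invariant under σ_j(f^+) and σ_j(f^-) are {0} and G^j. -/
/-!
Inside `ℤ →₀ K`, a subspace `X` of the span of `single a 1, …, single b 1` that is stable under
a lowering operator `single i 1 ↦ single (i - 1) 1` (killing `single a 1`) and a raising operator
`single i 1 ↦ cᵢ • single (i + 1) 1` with all `cᵢ ≠ 0` is `⊥` or everything: if `x ∈ X` is nonzero
with top coefficient at `m`, lowering `m - a` times leaves a nonzero multiple of `single a 1`, and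
raising it recovers every basis vector. For `σ_j` the lowering operator is `σ_j(f^-)`, the raising
operator is `σ_j(f^+)`, and the `cᵢ = A(l, i + 1, j)` do not vanish inside the range.
-/

noncomputable section

open Finsupp Set

namespace Finsupp

variable {K : Type*} [Field K] {a b : ℤ}

theorem pow_apply_single_of_lowering {L : (ℤ →₀ K) →ₗ[K] (ℤ →₀ K)}
    (hL : ∀ i, a < i → i ≤ b → L (single i 1) = single (i - 1) 1) (hLa : L (single a 1) = 0)
    (k : ℕ) {i : ℤ} (hai : a ≤ i) (hib : i ≤ b) :
    (L ^ k) (single i 1) = if a ≤ i - k then single (i - k) 1 else 0 := by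
  induction k generalizing i with
  | zero => simp [hai]
  | succ k ih =>
    rw [pow_succ, Module.End.mul_apply]
    rcases hai.lt_or_eq with hai | rfl
    · rw [hL i hai hib, ih (by omega) (by omega), show i - 1 - k = i - (k + 1 : ℕ) by push_cast; ring]
    · rw [hLa, map_zero, if_neg (by omega)]

theorem pow_apply_eq_smul_single_bottom_of_lowering {L : (ℤ →₀ K) →ₗ[K] (ℤ →₀ K)}
    (hL : ∀ i, a < i → i ≤ b → L (single i 1) = single (i - 1) 1) (hLa : L (single a 1) = 0)
    {x : ℤ →₀ K} (hx : x ∈ supported K K (Icc a b)) {m : ℤ} (hm : m ∈ x.support)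
    (hmax : ∀ i ∈ x.support, i ≤ m) :
    (L ^ (m - a).toNat) x = x m • single a 1 := by
  have hk : ((m - a).toNat : ℤ) = m - a := Int.toNat_of_nonneg (by linarith [(hx hm).1])
  have hpow {i : ℤ} (hi : i ∈ x.support) :=
    pow_apply_single_of_lowering hL hLa (m - a).toNat (hx hi).1 (hx hi).2
  conv_lhs => rw [← x.sum_single]
  rw [Finsupp.sum, map_sum, Finset.sum_eq_single m]
  · rw [← smul_single_one, map_smul, hpow hm, if_pos (by omega), show m - _ = a by omega]
  · intro i hi him
    rw [← smul_single_one, map_smul, hpow hi, if_neg (by have := hmax i hi; omega), smul_zero]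
  · exact fun hm' => absurd hm hm'

theorem single_bottom_mem_of_lowering {L : (ℤ →₀ K) →ₗ[K] (ℤ →₀ K)}
    (hL : ∀ i, a < i → i ≤ b → L (single i 1) = single (i - 1) 1) (hLa : L (single a 1) = 0)
    {X : Submodule K (ℤ →₀ K)} (hX : X ≤ supported K K (Icc a b)) (hXL : ∀ x ∈ X, L x ∈ X)
    (hbot : X ≠ ⊥) : single a 1 ∈ X := by
  obtain ⟨x, hxX, hx0⟩ := (Submodule.ne_bot_iff X).mp hbot
  have hne : x.support.Nonempty := support_nonempty_iff.mpr hx0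
  set m := x.support.max' hne
  have hmx : m ∈ x.support := x.support.max'_mem hne
  have hLx := Module.End.pow_apply_mem_of_forall_mem (m - a).toNat hXL x hxX
  rw [pow_apply_eq_smul_single_bottom_of_lowering hL hLa (hX hxX) hmx
    (fun i hi => x.support.le_max' i hi)] at hLx
  exact (X.smul_mem_iff (mem_support_iff.mp hmx)).mp hLx

theorem single_mem_of_raising {R : (ℤ →₀ K) →ₗ[K] (ℤ →₀ K)}
    (hR : ∀ i, a ≤ i → i < b → ∃ c : K, c ≠ 0 ∧ R (single i 1) = c • single (i + 1) 1)
    {X : Submodule K (ℤ →₀ K)} (hXR : ∀ x ∈ X, R x ∈ X) (ha : single a 1 ∈ X)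
    {i : ℤ} (hai : a ≤ i) (hib : i ≤ b) : single i 1 ∈ X := by
  induction i, hai using Int.leInduction with
  | base => exact ha
  | succ i hai ih =>
    obtain ⟨c, hc, hRi⟩ := hR i hai (by omega)
    have hmem := hXR _ (ih (by omega))
    rw [hRi] at hmem
    exact (X.smul_mem_iff hc).mp hmem

theorem eq_bot_or_eq_supported_Icc_of_lowering_of_raising {L R : (ℤ →₀ K) →ₗ[K] (ℤ →₀ K)}
    (hL : ∀ i, a < i → i ≤ b → L (single i 1) = single (i - 1) 1) (hLa : L (single a 1) = 0)
    (hR : ∀ i, a ≤ i → i < b → ∃ c : K, c ≠ 0 ∧ R (single i 1) = c • single (i + 1) 1)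
    {X : Submodule K (ℤ →₀ K)} (hX : X ≤ supported K K (Icc a b))
    (hXL : ∀ x ∈ X, L x ∈ X) (hXR : ∀ x ∈ X, R x ∈ X) :
    X = ⊥ ∨ X = supported K K (Icc a b) := by
  refine or_iff_not_imp_left.mpr fun hbot => le_antisymm hX ?_
  rw [supported_eq_span_single, Submodule.span_le]
  rintro _ ⟨i, ⟨hai, hib⟩, rfl⟩
  exact single_mem_of_raising hR hXR (single_bottom_mem_of_lowering hL hLa hX hXL hbot) hai hib

end Finsupp

theorem A_of_even {l : ℕ} {i j : ℤ} (h : Even (i - j)) : A l i j = (i - j) / 8 := by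
  rw [A, h.neg_one_zpow, h.add_one.neg_one_zpow]
  ring

theorem A_of_odd {l : ℕ} {i j : ℤ} (h : Odd (i - j)) : A l i j = (i + j - 2 * l - 1) / 8 := by
  rw [A, h.neg_one_zpow, h.add_one.neg_one_zpow]
  ring

theorem A_add_one_ne_zero {l j : ℕ} {i : ℤ} (hji : j ≤ i) (hil : i < 2 * l - j) :
    A l (i + 1) j ≠ 0 := by
  rcases Int.even_or_odd (i + 1 - j) with h | h
  · rw [A_of_even h]
    exact div_ne_zero (by exact_mod_cast (show i + 1 - j ≠ 0 by omega)) (by norm_num)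
  · rw [A_of_odd h]
    exact div_ne_zero (by exact_mod_cast (show i + 1 + j - 2 * l - 1 ≠ 0 by omega)) (by norm_num)

theorem fv_of_mem {l j : ℕ} {r : ℤ} (h₁ : j ≤ r) (h₂ : r ≤ 2 * l - j) :
    fv l j r = single r 1 :=
  if_pos ⟨h₁, h₂⟩

theorem fv_of_lt {l j : ℕ} {r : ℤ} (h : r < j) : fv l j r = 0 :=
  if_neg fun h' => by omega

theorem sFm_single_one (l j : ℕ) (i : ℤ) : sFm l j (single i 1) = fv l j (i - 1) := by
  rw [sFm, lsum_single, LinearMap.toSpanSingleton_apply, one_smul]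

theorem sFp_single_one (l j : ℕ) (i : ℤ) :
    sFp l j (single i 1) = A l (i + 1) j • fv l j (i + 1) := by
  rw [sFp, lsum_single, LinearMap.toSpanSingleton_apply, one_smul]

theorem Gmod_eq_supported (l j : ℕ) : Gmod l j = supported ℂ ℂ (Icc (j : ℤ) (2 * l - j)) := by
  rw [supported_eq_span_single, Gmod]
  congr 1
  ext x
  simp only [mem_ofPred_eq, mem_image, mem_Icc, and_assoc, eq_comm]

theorem sigma_j_irreducible_general (l j : ℕ)
    (X : Submodule ℂ (ℤ →₀ ℂ)) (hX : X ≤ Gmod l j)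
    (hFp : ∀ x ∈ X, sFp l j x ∈ X) (hFm : ∀ x ∈ X, sFm l j x ∈ X) :
    X = ⊥ ∨ X = Gmod l j := by
  rw [Gmod_eq_supported] at hX ⊢
  refine eq_bot_or_eq_supported_Icc_of_lowering_of_raising ?_ ?_ ?_ hX hFm hFp
  · intro i hji hil
    rw [sFm_single_one, fv_of_mem (by omega) (by omega)]
  · rw [sFm_single_one, fv_of_lt (by omega)]
  · intro i hji hil
    exact ⟨_, A_add_one_ne_zero hji hil, by rw [sFp_single_one, fv_of_mem (by omega) (by omega)]⟩

/-- the representation `σ_j` of `osp(1|2)` on `G^j` is irreducible: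
the only subspaces of `G^j` invariant under `σ_j(f^+)` and `σ_j(f^-)` are `{0}`
and `G^j` itself. -/
theorem sigma_j_irreducible (l j : ℕ) (hl : 1 ≤ l) (hj : j ≤ l)
    (X : Submodule ℂ (ℤ →₀ ℂ)) (hX : X ≤ Gmod l j)
    (hFp : ∀ x ∈ X, sFp l j x ∈ X) (hFm : ∀ x ∈ X, sFm l j x ∈ X) :
    X = ⊥ ∨ X = Gmod l j :=
  sigma_j_irreducible_general l j X hX hFp hFm
end
end

section
/- Let {ε^i}_{i=1}^{2l} be the dual of a symplectic basis of (V,ω) and write ω = ε^1∧ε^{l+1} + … + ε^l∧ε^{2l} ∈ ⋀^2 V*. For 0 ≤ j ≤ l and 0 ≤ i ≤ 2l with i + j ≤ 2l and i − j even and ≥ 0, the vector v = ω^{∧((i−j)/2)} ∧ ε^{l+1} ∧ … ∧ ε^{l+j} ∈ ⋀^i V* is nonzero. More precisely, when written in the standard basis of ⋀^i V*, the coefficient of the basis monomial ε^{j+1}∧…∧ε^{j+(i−j)/2} ∧ ε^{l+1}∧…∧ε^{l+j} ∧ ε^{l+j+1}∧…∧ε^{l+j+(i−j)/2} is nonzero.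 -/
open ExteriorAlgebra

noncomputable section

/-- Exterior forms on `V = ℝ^(2l)`. -/
abbrev FormsR (l : ℕ) := ExteriorAlgebra ℝ (Fin (2 * l) → ℝ)

/-- The dual basis vector `ε^k` (0-based index `k : ℕ`; zero if out of range). -/
def epsN (l : ℕ) (k : ℕ) : FormsR l :=
  ι ℝ (fun t => if (t : ℕ) = k then 1 else 0)

/-- The basis vector `e_k` of `V` (0-based index). -/
def eN (l : ℕ) (k : ℕ) : Fin (2 * l) → ℝ :=
  fun t => if (t : ℕ) = k then 1 else 0

/-- Interior multiplication by `v ∈ V`. -/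
def contrR (l : ℕ) (v : Fin (2 * l) → ℝ) : FormsR l →ₗ[ℝ] FormsR l :=
  CliffordAlgebra.contractLeft
    (∑ k : Fin (2 * l), v k • (LinearMap.proj k : (Fin (2 * l) → ℝ) →ₗ[ℝ] ℝ))

/-- The symplectic form `ω = ε^1∧ε^{l+1} + … + ε^l∧ε^{2l}` as a 2-form
(0-based: `Σ_{k<l} ε^k ∧ ε^{k+l}`). -/
def omegaTwoForm (l : ℕ) : FormsR l :=
  ∑ k : Fin l, epsN l k * epsN l ((k : ℕ) + l)

/-- The vector `v = ω^{∧m} ∧ ε^{l+1} ∧ … ∧ ε^{l+j}` (0-based: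
`ω^m ∧ ε^l ∧ … ∧ ε^{l+j−1}`), where `m = (i−j)/2`. -/
def vij (l i j : ℕ) : FormsR l :=
  omegaTwoForm l ^ ((i - j) / 2) * ((List.range' l j).map (epsN l)).prod

/-!
Contract `v = ω^m ∧ ε^{l+1} ∧ … ∧ ε^{l+j}` successively with `e_{j+1}, …, e_{j+m}`. Since `ω`
is even and `ε^t` does not occur among the other factors, contraction with `e_t` (`t ≤ l`) acts
on `ω^n` as `n ω^{n-1} ∧ ε^{t+l}`; after `m` steps one is left with `m!` times a wedge of the
distinct covectors `ε^{l+1}, …, ε^{l+j+m}`, and contracting that with the dual vectors, in any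
order, gives `±1`. Hence the full contraction is `±m! ≠ 0`.
-/

namespace ExteriorAlgebra

open CliffordAlgebra

variable {R M α : Type*} [CommRing R] [AddCommGroup M] [Module R M]

lemma commute_ι_mul_ι_ι (a b c : M) : Commute (ι R a * ι R b) (ι R c) := by
  have swap (x y : M) : ι R x * ι R y = -(ι R y * ι R x) :=
    eq_neg_of_add_eq_zero_left (ι_add_mul_swap x y)
  calc ι R a * ι R b * ι R c = -(ι R a * ι R c * ι R b) := by
        rw [mul_assoc, swap b c, mul_neg, ← mul_assoc]
    _ = ι R c * (ι R a * ι R b) := by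
        rw [swap a c, neg_mul, neg_neg, mul_assoc]

lemma contractLeft_ι_mul_ι_mul_of_apply_eq_zero (d : Module.Dual R M) (a : M) {b : M}
    (hb : d b = 0) (x : ExteriorAlgebra R M) :
    contractLeft d (ι R a * (ι R b * x))
      = d a • (ι R b * x) + ι R a * (ι R b * contractLeft d x) := by
  rw [contractLeft_ι_mul, contractLeft_ι_mul, hb, zero_smul, zero_sub, mul_neg, sub_neg_eq_add]

lemma contractLeft_prod_map_ι_of_forall_apply_eq_zero (d : Module.Dual R M) (v : α → M)
    (L : List α) (hL : ∀ a ∈ L, d (v a) = 0) :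
    contractLeft d (L.map fun a => ι R (v a)).prod = 0 := by
  induction L with
  | nil => exact contractLeft_one _ d
  | cons a L ih =>
    rw [List.map_cons, List.prod_cons, contractLeft_ι_mul, hL a List.mem_cons_self, zero_smul,
      ih fun b hb => hL b (List.mem_cons_of_mem a hb), mul_zero, sub_zero]

lemma contractLeft_prod_map_ι_of_mem [DecidableEq α] (d : Module.Dual R M) (v : α → M)
    {L : List α} (hL : L.Nodup) {t : α} (ht : t ∈ L)
    (hd : ∀ a ∈ L, d (v a) = if a = t then 1 else 0) :
    contractLeft d (L.map fun a => ι R (v a)).prod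
      = (-1 : R) ^ L.idxOf t • ((L.erase t).map fun a => ι R (v a)).prod := by
  induction L with
  | nil => simp at ht
  | cons a L ih =>
    have hdL : ∀ b ∈ L, d (v b) = if b = t then 1 else 0 :=
      fun b hb => hd b (List.mem_cons_of_mem a hb)
    rw [List.map_cons, List.prod_cons, contractLeft_ι_mul, hd a List.mem_cons_self]
    rcases eq_or_ne a t with rfl | hat
    · rw [contractLeft_prod_map_ι_of_forall_apply_eq_zero d v L
          fun b hb => by rw [hdL b hb, if_neg (ne_of_mem_of_not_mem hb (List.nodup_cons.mp hL).1)],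
        List.idxOf_cons_self, List.erase_cons_head]
      simp
    · rw [ih hL.of_cons ((List.mem_cons.mp ht).resolve_left hat.symm) hdL, if_neg hat,
        List.idxOf_cons_ne L hat, List.erase_cons_tail (by simpa using hat), List.map_cons,
        List.prod_cons, pow_succ, mul_smul_comm, mul_neg_one, neg_smul]
      simp

lemma foldl_contractLeft_smul (d : α → Module.Dual R M) (N : List α) (c : R)
    (x : ExteriorAlgebra R M) :
    N.foldl (fun y k => contractLeft (d k) y) (c • x)
      = c • N.foldl (fun y k => contractLeft (d k) y) x :=
  List.foldl_hom (c • ·) fun y _ => map_smul _ c y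

lemma foldl_contractLeft_prod_map_ι_of_perm [DecidableEq α] (v : α → M)
    (d : α → Module.Dual R M) {L N : List α} (hLN : L.Perm N) (hL : L.Nodup)
    (hd : ∀ a ∈ L, ∀ b ∈ L, d a (v b) = if b = a then 1 else 0) :
    ∃ n : ℕ, N.foldl (fun y k => contractLeft (d k) y) (L.map fun a => ι R (v a)).prod
      = algebraMap R _ ((-1) ^ n) := by
  induction N generalizing L with
  | nil => exact ⟨0, by simp [hLN.eq_nil]⟩
  | cons k N ih =>
    have hk : k ∈ L := hLN.mem_iff.mpr List.mem_cons_self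
    obtain ⟨n, hn⟩ := ih (by simpa using hLN.erase k) (hL.erase k)
      fun a ha b hb => hd a (List.mem_of_mem_erase ha) b (List.mem_of_mem_erase hb)
    refine ⟨L.idxOf k + n, ?_⟩
    rw [List.foldl_cons, contractLeft_prod_map_ι_of_mem (d k) v hL hk (hd k hk),
      foldl_contractLeft_smul, hn, Algebra.smul_def, ← map_mul, pow_add]

end ExteriorAlgebra

section Symplectic

open CliffordAlgebra

variable {l : ℕ}

/-- Written exactly as in `contrR`, so that `contrR_eN` holds by `rfl`. -/
def coordN (l k : ℕ) : Module.Dual ℝ (Fin (2 * l) → ℝ) :=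
  ∑ t : Fin (2 * l), eN l k t • (LinearMap.proj t : (Fin (2 * l) → ℝ) →ₗ[ℝ] ℝ)

lemma contrR_eN (k : ℕ) : contrR l (eN l k) = contractLeft (coordN l k) := rfl

lemma epsN_eq_ι (k : ℕ) : epsN l k = ι ℝ (eN l k) := rfl

lemma coordN_eN {t : ℕ} (ht : t < 2 * l) (u : ℕ) :
    coordN l t (eN l u) = if u = t then 1 else 0 := by
  rw [coordN, LinearMap.sum_apply, Finset.sum_eq_single (⟨t, ht⟩ : Fin (2 * l))]
  · simp [eN, eq_comm]
  · intro s _ hs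
    simp [eN, Fin.val_ne_of_ne hs]
  · simp

lemma commute_omegaTwoForm_epsN (s : ℕ) : Commute (omegaTwoForm l) (epsN l s) :=
  Commute.sum_left _ _ _ fun _ _ => commute_ι_mul_ι_ι _ _ _

lemma contrR_omegaTwoForm_mul {t : ℕ} (ht : t < l) (x : FormsR l) :
    contrR l (eN l t) (omegaTwoForm l * x)
      = epsN l (t + l) * x + omegaTwoForm l * contrR l (eN l t) x := by
  have hcoord (u : ℕ) : coordN l t (eN l u) = if u = t then 1 else 0 := coordN_eN (by omega) u
  simp only [omegaTwoForm, Finset.sum_mul, map_sum, mul_assoc, epsN_eq_ι, contrR_eN]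
  rw [Finset.sum_congr rfl fun k _ => contractLeft_ι_mul_ι_mul_of_apply_eq_zero _ _
    ((hcoord _).trans (if_neg (by omega))) x, Finset.sum_add_distrib,
    Finset.sum_eq_single (⟨t, ht⟩ : Fin l)]
  · simp [hcoord]
  · intro k _ hk
    rw [hcoord, if_neg (Fin.val_ne_of_ne hk), zero_smul]
  · simp

lemma contrR_omegaTwoForm_pow_succ_mul {t : ℕ} (ht : t < l) {x : FormsR l}
    (hx : contrR l (eN l t) x = 0) (n : ℕ) :
    contrR l (eN l t) (omegaTwoForm l ^ (n + 1) * x)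
      = ((n : ℝ) + 1) • (omegaTwoForm l ^ n * (epsN l (t + l) * x)) := by
  induction n with
  | zero => simp [contrR_omegaTwoForm_mul ht, hx]
  | succ n ih =>
    rw [pow_succ', mul_assoc, contrR_omegaTwoForm_mul ht, ih, mul_smul_comm, ← mul_assoc,
      ← ((commute_omegaTwoForm_epsN _).pow_left _).eq, mul_assoc, ← mul_assoc (omegaTwoForm l),
      ← pow_succ']
    push_cast
    module

lemma foldl_contrR_omegaTwoForm_pow_mul {t r : ℕ} (htr : t + r ≤ l) (n : ℕ) {Q : List ℕ}
    (hQ : ∀ q ∈ Q, l ≤ q) :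
    (List.range' t r).foldl (fun y k => contractLeft (coordN l k) y)
        (omegaTwoForm l ^ (n + r) * (Q.map (epsN l)).prod)
      = ((n + r).descFactorial r : ℝ) •
          (omegaTwoForm l ^ n * (((List.range' (t + l) r).reverse ++ Q).map (epsN l)).prod) := by
  induction r generalizing t Q with
  | zero => simp
  | succ r ih =>
    have hQt : contrR l (eN l t) (Q.map (epsN l)).prod = 0 :=
      contractLeft_prod_map_ι_of_forall_apply_eq_zero (coordN l t) (eN l) Q fun q hq =>
        (coordN_eN (by omega) q).trans (if_neg (by have := hQ q hq; omega))
    have hQ' : ∀ q ∈ (t + l) :: Q, l ≤ q :=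
      List.forall_mem_cons.mpr ⟨Nat.le_add_left l t, hQ⟩
    rw [List.range'_succ, List.foldl_cons, ← contrR_eN, ← add_assoc,
      contrR_omegaTwoForm_pow_succ_mul (by omega) hQt, ← List.prod_cons, ← List.map_cons,
      foldl_contractLeft_smul, ih (by omega) hQ', smul_smul, Nat.succ_descFactorial_succ]
    rw [List.range'_succ, List.reverse_cons, List.append_assoc, List.singleton_append,
      show t + 1 + l = t + l + 1 by omega, Nat.cast_mul, Nat.cast_succ]

lemma foldl_contrR_vij {i j : ℕ} (hjm : j + (i - j) / 2 ≤ l) :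
    ∃ n : ℕ, (List.range' j ((i - j) / 2) ++ List.range' l j ++
        List.range' (l + j) ((i - j) / 2)).foldl
          (fun y k => contractLeft (coordN l k) y) (vij l i j)
      = algebraMap ℝ (FormsR l) (((i - j) / 2).factorial * (-1) ^ n) := by
  set m := (i - j) / 2
  have hvij := foldl_contrR_omegaTwoForm_pow_mul hjm 0 (Q := List.range' l j)
    fun q hq => (List.mem_range'_1.mp hq).1
  rw [zero_add, pow_zero, one_mul, Nat.descFactorial_self] at hvij
  have hperm :
      ((List.range' (j + l) m).reverse ++ List.range' l j).Perm (List.range' l (j + m)) := by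
    rw [← List.range'_append_1, add_comm j l]
    exact ((List.reverse_perm _).append_right _).trans List.perm_append_comm
  obtain ⟨n, hn⟩ := foldl_contractLeft_prod_map_ι_of_perm (R := ℝ) (eN l) (coordN l) hperm
    (hperm.nodup_iff.mpr List.nodup_range') fun a ha b _ =>
      coordN_eN (by have := (List.mem_range'_1.mp (hperm.mem_iff.mp ha)).2; omega) b
  refine ⟨n, ?_⟩
  rw [List.append_assoc, List.range'_append_1, List.foldl_append, vij, hvij,
    foldl_contractLeft_smul, List.map_congr_left fun _ _ => epsN_eq_ι _, hn, Algebra.smul_def,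
    ← map_mul]

end Symplectic

theorem vij_nonzero_general (l i j : ℕ) (hj : j ≤ l)
    (hsum : i + j ≤ 2 * l) :
    vij l i j ≠ 0 ∧
    (List.range' j ((i - j) / 2) ++ List.range' l j ++
        List.range' (l + j) ((i - j) / 2)).foldl
      (fun acc k => contrR l (eN l k) acc) (vij l i j) ≠ 0 := by
  obtain ⟨n, hn⟩ := foldl_contrR_vij (l := l) (i := i) (j := j) (by omega)
  have hc : algebraMap ℝ (FormsR l) (((i - j) / 2).factorial * (-1) ^ n) ≠ 0 := by
    rw [ne_eq, ExteriorAlgebra.algebraMap_eq_zero_iff]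
    exact mul_ne_zero (by positivity) (pow_ne_zero n (by norm_num))
  rw [← hn] at hc
  simp only [contrR_eN]
  exact ⟨fun hv => hc (by rw [hv, List.foldl_fixed' fun _ => map_zero _]), hc⟩

/-- for `0 ≤ j ≤ l`, `j ≤ i`, `i − j` even and `i + j ≤ 2l`, the
`i`-form `v = ω^{∧((i−j)/2)} ∧ ε^{l+1} ∧ … ∧ ε^{l+j}` is nonzero; more
precisely, its coefficient on the basis monomial
`ε^{j+1}∧…∧ε^{j+(i−j)/2} ∧ ε^{l+1}∧…∧ε^{l+j} ∧ ε^{l+j+1}∧…∧ε^{l+j+(i−j)/2}`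
is nonzero: the full contraction of `v` against the corresponding dual basis
vectors is a nonzero scalar. -/
theorem vij_nonzero (l i j : ℕ) (hj : j ≤ l) (hji : j ≤ i)
    (heven : 2 ∣ (i - j)) (hsum : i + j ≤ 2 * l) :
    vij l i j ≠ 0 ∧
    (List.range' j ((i - j) / 2) ++ List.range' l j ++
        List.range' (l + j) ((i - j) / 2)).foldl
      (fun acc k => contrR l (eN l k) acc) (vij l i j) ≠ 0 :=
  vij_nonzero_general l i j hj hsum
end
end
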